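/- arXiv:2407.16592 — 6 statements merged into one kernel-verified Lean document; each statement's English description precedes it below -/
import Mathlib

section
/- Let d ≥ 1 and let b = (b^i_{jk}) be a real tensor with b^i_{jk} = b^i_{kj} for all indices, defining the bilinear vector field B_b(x,y)^i = Σ_{j,k} b^i_{jk} x^j y^k. Then the following are equivalent: (a) x·B_b(x,x) = 0 and div_x B_b(x,x) = 0 for all x ∈ ℝ^d, and B_b(e_j,e_j) = 0 for all 1 ≤ j ≤ d; (b) b^i_{ii} = b^i_{ij} = b^i_{jj} = 0 for all 1 ≤ i,j ≤ d, and b^i_{jk} + b^j_{ik} + b^k_{ij} = 0 for all 1 ≤ i,j,k ≤ d. -/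
open scoped BigOperators

/-- The bilinear vector field on `ℝ^d` determined by the coefficient tensor `b`:
`B_b(x,y)^i = ∑_{j,k} b^i_{jk} x^j y^k`. -/
noncomputable def Bb {d : ℕ} (b : Fin d → Fin d → Fin d → ℝ) (x y : Fin d → ℝ) : Fin d → ℝ :=
  fun i => ∑ j, ∑ k, b i j k * x j * y k

/-!
Write `T(x,y,z) = x · B_b(y,z)`, a trilinear form with `T(e_i,e_j,e_k) = b^i_{jk}`.
If the cubic form `T(x,x,x)` vanishes, polarization gives that the sum of `T` over the six
orderings of `(e_i,e_j,e_k)` vanishes, which by the symmetry of `b` in its last two indices is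
twice the cyclic sum `b^i_{jk} + b^j_{ik} + b^k_{ij}`. Conversely, summing the cyclic identity
against `x^i x^j x^k` gives three times the cubic form. The vanishing of `b^i_{jj}` and
`b^i_{ij}` comes from `B_b(e_j,e_j)^i = b^i_{jj}` and the cyclic identity at `(i,i,j)`; and
`div B_b(x,x) = ∑_{i,k} (b^i_{ik} + b^i_{ki}) x^k`, which vanishes once `b^i_{ik} = 0`.
-/

namespace Bb

variable {d : ℕ} (b : Fin d → Fin d → Fin d → ℝ)

theorem add_left (x y z : Fin d → ℝ) : Bb b (x + y) z = Bb b x z + Bb b y z := by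
  ext i
  simp only [Bb, Pi.add_apply, mul_add, add_mul, Finset.sum_add_distrib]

theorem add_right (x y z : Fin d → ℝ) : Bb b x (y + z) = Bb b x y + Bb b x z := by
  ext i
  simp only [Bb, Pi.add_apply, mul_add, Finset.sum_add_distrib]

theorem single_single_apply (i j k : Fin d) :
    Bb b (Pi.single j 1) (Pi.single k 1) i = b i j k := by
  simp [Bb, Pi.single_apply]

theorem single_dotProduct_single_single (i j k : Fin d) :
    Pi.single i 1 ⬝ᵥ Bb b (Pi.single j 1) (Pi.single k 1) = b i j k := by
  rw [single_dotProduct, one_mul, single_single_apply]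

theorem dotProduct_self_self_eq_sum (x : Fin d → ℝ) :
    x ⬝ᵥ Bb b x x = ∑ i, ∑ j, ∑ k, b i j k * (x i * x j * x k) := by
  simp only [dotProduct, Bb, Finset.mul_sum]
  refine Finset.sum_congr rfl fun i _ => Finset.sum_congr rfl fun j _ =>
    Finset.sum_congr rfl fun k _ => by ring

theorem polarization (x y z : Fin d → ℝ) :
    (x + y + z) ⬝ᵥ Bb b (x + y + z) (x + y + z) - (x + y) ⬝ᵥ Bb b (x + y) (x + y)
      - (x + z) ⬝ᵥ Bb b (x + z) (x + z) - (y + z) ⬝ᵥ Bb b (y + z) (y + z)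
      + x ⬝ᵥ Bb b x x + y ⬝ᵥ Bb b y y + z ⬝ᵥ Bb b z z
      = x ⬝ᵥ Bb b y z + x ⬝ᵥ Bb b z y + y ⬝ᵥ Bb b x z + y ⬝ᵥ Bb b z x
        + z ⬝ᵥ Bb b x y + z ⬝ᵥ Bb b y x := by
  simp only [add_left, add_right, add_dotProduct, dotProduct_add]
  ring

theorem cyclic_of_dotProduct_self_self_eq_zero (hsym : ∀ i j k, b i j k = b i k j)
    (h : ∀ x, x ⬝ᵥ Bb b x x = 0) (i j k : Fin d) :
    b i j k + b j i k + b k i j = 0 := by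
  have hpol := polarization b (Pi.single i 1) (Pi.single j 1) (Pi.single k 1)
  simp only [h, single_dotProduct_single_single] at hpol
  linarith [hsym i j k, hsym j i k, hsym k i j]

theorem dotProduct_self_self_eq_zero_of_cyclic (hcyc : ∀ i j k, b i j k + b j i k + b k i j = 0)
    (x : Fin d → ℝ) : x ⬝ᵥ Bb b x x = 0 := by
  set S := ∑ i, ∑ j, ∑ k, b i j k * (x i * x j * x k)
  have hswap : ∑ i, ∑ j, ∑ k, b j i k * (x i * x j * x k) = S := by
    rw [Finset.sum_comm]
    refine Finset.sum_congr rfl fun i _ => Finset.sum_congr rfl fun j _ =>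
      Finset.sum_congr rfl fun k _ => by ring
  have hrot : ∑ i, ∑ j, ∑ k, b k i j * (x i * x j * x k) = S := by
    rw [Finset.sum_congr rfl fun _ _ => Finset.sum_comm, Finset.sum_comm]
    refine Finset.sum_congr rfl fun i _ => Finset.sum_congr rfl fun j _ =>
      Finset.sum_congr rfl fun k _ => by ring
  have h3S : 3 * S = 0 := calc
    3 * S = ∑ i, ∑ j, ∑ k, (b i j k + b j i k + b k i j) * (x i * x j * x k) := by
      simp only [add_mul, Finset.sum_add_distrib, hswap, hrot]
      ring
    _ = 0 := by simp only [hcyc, zero_mul, Finset.sum_const_zero]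
  rw [dotProduct_self_self_eq_sum]
  linarith

theorem hasFDerivAt_diag_apply (i : Fin d) (x : Fin d → ℝ) :
    HasFDerivAt (fun y => Bb b y y i)
      (∑ j, ∑ k, b i j k • (x j • ContinuousLinearMap.proj (R := ℝ) (φ := fun _ : Fin d => ℝ) k
        + x k • ContinuousLinearMap.proj (R := ℝ) (φ := fun _ : Fin d => ℝ) j)) x := by
  refine HasFDerivAt.fun_sum fun j _ => HasFDerivAt.fun_sum fun k _ => ?_
  simpa [mul_assoc] using
    ((hasFDerivAt_apply j x).mul (hasFDerivAt_apply k x)).const_mul (b i j k)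

theorem fderiv_diag_apply (i : Fin d) (x v : Fin d → ℝ) :
    fderiv ℝ (fun y => Bb b y y i) x v = Bb b v x i + Bb b x v i := by
  rw [(hasFDerivAt_diag_apply b i x).fderiv]
  simp only [Bb, sum_apply, ← Finset.sum_add_distrib]
  refine Finset.sum_congr rfl fun j _ => Finset.sum_congr rfl fun k _ => ?_
  simp only [smul_add, add_apply, smul_apply, ContinuousLinearMap.proj_apply, smul_eq_mul]
  ring

theorem divergence_diag_eq_zero (hsym : ∀ i j k, b i j k = b i k j)
    (h : ∀ i k, b i i k = 0) (x : Fin d → ℝ) :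
    ∑ i, fderiv ℝ (fun y => Bb b y y i) x (Pi.single i 1) = 0 := by
  refine Finset.sum_eq_zero fun i _ => ?_
  rw [fderiv_diag_apply]
  simp [Bb, Pi.single_apply, h, (hsym i _ i).trans (h i _)]

end Bb

open Bb in
theorem stmt0_general (d : ℕ) (b : Fin d → Fin d → Fin d → ℝ)
    (hsym : ∀ i j k, b i j k = b i k j) :
    ((∀ x : Fin d → ℝ, ∑ i, x i * Bb b x x i = 0) ∧
     (∀ x : Fin d → ℝ, ∑ i, fderiv ℝ (fun y => Bb b y y i) x (Pi.single i 1) = 0) ∧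
     (∀ j : Fin d, Bb b (Pi.single j 1) (Pi.single j 1) = 0)) ↔
    ((∀ i j : Fin d, b i i i = 0 ∧ b i i j = 0 ∧ b i j j = 0) ∧
     (∀ i j k : Fin d, b i j k + b j i k + b k i j = 0)) := by
  constructor
  · rintro ⟨hcubic, -, hdiag⟩
    have hcyc := cyclic_of_dotProduct_self_self_eq_zero b hsym hcubic
    have hijj : ∀ i j, b i j j = 0 := fun i j => by
      simpa only [single_single_apply, Pi.zero_apply] using congrFun (hdiag j) i
    have hiij : ∀ i j, b i i j = 0 := fun i j => by linarith [hcyc i i j, hijj j i]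
    exact ⟨fun i j => ⟨hijj i i, hiij i j, hijj i j⟩, hcyc⟩
  · rintro ⟨hzero, hcyc⟩
    refine ⟨dotProduct_self_self_eq_zero_of_cyclic b hcyc,
      divergence_diag_eq_zero b hsym fun i k => (hzero i k).2.1, fun j => ?_⟩
    ext i
    simpa only [single_single_apply, Pi.zero_apply] using (hzero i j).2.2

theorem stmt0 (d : ℕ) (hd : 1 ≤ d) (b : Fin d → Fin d → Fin d → ℝ)
    (hsym : ∀ i j k, b i j k = b i k j) :
    ((∀ x : Fin d → ℝ, ∑ i, x i * Bb b x x i = 0) ∧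
     (∀ x : Fin d → ℝ, ∑ i, fderiv ℝ (fun y => Bb b y y i) x (Pi.single i 1) = 0) ∧
     (∀ j : Fin d, Bb b (Pi.single j 1) (Pi.single j 1) = 0)) ↔
    ((∀ i j : Fin d, b i i i = 0 ∧ b i i j = 0 ∧ b i j j = 0) ∧
     (∀ i j k : Fin d, b i j k + b j i k + b k i j = 0)) :=
  stmt0_general d b hsym
end

section
/- Let B : ℝ^d × ℝ^d → ℝ^d be a symmetric bilinear map with x·B(x,x) = 0 for all x, let A be a symmetric positive semidefinite matrix, and fix ε ∈ (0,1), T > 0. Suppose u : [0,T] → ℝ^d is continuously differentiable and satisfies du/dt = B(u,u) + 2B(u,F(t)) + B(F(t),F(t)) − εAu − εAF(t) where F : [0,T] → ℝ^d is continuous with sup_{0≤t≤T}|F(t)| ≤ ε. Then there exists a constant C ≥ 1, depending only on B and A (not on ε, T, or u), such that for all t ∈ [0,T]: e^{−εCt}|u(0)| − √ε ≤ |u(t)| ≤ e^{εCt}(|u(0)| + √ε). -/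
/-! Since `⟪u, B(u,u)⟫ = 0`, the cubic term drops out of `d/dt ‖u‖² = 2⟪u, u'⟫`, and every
remaining term carries a factor `ε` (through `ε A` or `‖F‖ ≤ ε`), so that
`|d/dt (‖u‖² + ε)| ≤ 2εC (‖u‖² + ε)`. Grönwall's inequality, forwards and backwards in time, traps
`‖u t‖² + ε` between `e^{∓2εCt} (‖u 0‖² + ε)`, and taking square roots gives both bounds. -/

open Set Real

theorem exists_norm_le_of_symmetric_bilinear {E F : Type*} [NormedAddCommGroup E]
    [NormedSpace ℝ E] [FiniteDimensional ℝ E] [NormedAddCommGroup F] [NormedSpace ℝ F]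
    (B : E → E → F) (hadd : ∀ x y z, B (x + y) z = B x z + B y z)
    (hsmul : ∀ (c : ℝ) x y, B (c • x) y = c • B x y) (hsymm : ∀ x y, B x y = B y x) :
    ∃ M, 0 ≤ M ∧ ∀ x y, ‖B x y‖ ≤ M * ‖x‖ * ‖y‖ := by
  let L : E →ₗ[ℝ] E →ₗ[ℝ] F := LinearMap.mk₂ ℝ B hadd hsmul
    (fun x y z => by rw [hsymm, hadd, hsymm y, hsymm z])
    (fun c x y => by rw [hsymm, hsmul, hsymm y])
  let L' : E →L[ℝ] E →L[ℝ] F :=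
    LinearMap.toContinuousLinearMap (LinearMap.toContinuousLinearMap.toLinearMap ∘ₗ L)
  exact ⟨‖L'‖, L'.opNorm_nonneg, L'.le_opNorm₂⟩

section Gronwall

variable {E : Type*} [NormedAddCommGroup E] [NormedSpace ℝ E] {f f' : ℝ → E} {K T : ℝ}

theorem norm_le_norm_mul_exp_of_norm_deriv_le (hf : ∀ s ∈ Icc 0 T, HasDerivAt f (f' s) s)
    (bound : ∀ s ∈ Icc 0 T, ‖f' s‖ ≤ K * ‖f s‖) {t : ℝ} (ht : t ∈ Icc 0 T) :
    ‖f t‖ ≤ ‖f 0‖ * exp (K * t) := by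
  have h := norm_le_gronwallBound_of_norm_deriv_right_le (ε := 0)
    (fun s hs => (hf s hs).continuousAt.continuousWithinAt)
    (fun s hs => (hf s (Ico_subset_Icc_self hs)).hasDerivWithinAt) le_rfl
    (fun s hs => by simpa using bound s (Ico_subset_Icc_self hs)) t ht
  rwa [gronwallBound_ε0, sub_zero] at h

theorem norm_mul_exp_neg_le_of_norm_deriv_le (hf : ∀ s ∈ Icc 0 T, HasDerivAt f (f' s) s)
    (bound : ∀ s ∈ Icc 0 T, ‖f' s‖ ≤ K * ‖f s‖) {t : ℝ} (ht : t ∈ Icc 0 T) :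
    ‖f 0‖ * exp (-(K * t)) ≤ ‖f t‖ := by
  have hmem : ∀ s ∈ Icc 0 t, t - s ∈ Icc 0 T := fun s hs =>
    ⟨by linarith [hs.2], by linarith [hs.1, ht.2]⟩
  have hrev : ‖f (t - t)‖ ≤ ‖f (t - 0)‖ * exp (K * t) :=
    norm_le_norm_mul_exp_of_norm_deriv_le (f' := fun s => -f' (t - s))
      (fun s hs => by
        simpa using (hf (t - s) (hmem s hs)).scomp s ((hasDerivAt_id s).const_sub t))
      (fun s hs => by simpa using bound (t - s) (hmem s hs)) (right_mem_Icc.2 ht.1)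
  rw [sub_self, sub_zero] at hrev
  calc ‖f 0‖ * exp (-(K * t)) ≤ ‖f t‖ * exp (K * t) * exp (-(K * t)) := by gcongr
    _ = ‖f t‖ := by rw [mul_assoc, ← exp_add, add_neg_cancel, exp_zero, mul_one]

end Gronwall

theorem le_mul_add_sqrt_of_sq_add_le {a b δ e : ℝ} (hb : 0 ≤ b) (hδ : 0 ≤ δ) (he : 0 ≤ e)
    (h : a ^ 2 + δ ≤ e ^ 2 * (b ^ 2 + δ)) : a ≤ e * (b + √δ) := by
  have hsqrt := sq_sqrt hδ
  have hsq : a ^ 2 ≤ (e * (b + √δ)) ^ 2 := by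
    nlinarith [mul_nonneg (sq_nonneg e) (mul_nonneg hb (sqrt_nonneg δ))]
  exact (abs_le_of_sq_le_sq hsq (by positivity)).trans' (le_abs_self a)

theorem mul_sub_sqrt_le_of_le_sq_add {a b δ e : ℝ} (ha : 0 ≤ a) (hδ : 0 ≤ δ)
    (h : e ^ 2 * (b ^ 2 + δ) ≤ a ^ 2 + δ) : e * b - √δ ≤ a := by
  have hsqrt := sq_sqrt hδ
  have hsq : (e * b) ^ 2 ≤ (a + √δ) ^ 2 := by
    nlinarith [mul_nonneg (sq_nonneg e) hδ, mul_nonneg ha (sqrt_nonneg δ)]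
  linarith [(abs_le_of_sq_le_sq hsq (by positivity)).trans' (le_abs_self (e * b))]

theorem abs_inner_drift_le {E : Type*} [NormedAddCommGroup E] [InnerProductSpace ℝ E]
    {B : E → E → E} {A : E →L[ℝ] E} {M ε : ℝ} (hM : 0 ≤ M)
    (hB : ∀ x y, ‖B x y‖ ≤ M * ‖x‖ * ‖y‖) (hBenergy : ∀ x, inner ℝ x (B x x) = 0)
    (hε : 0 ≤ ε) (hε1 : ε ≤ 1) (x : E) {y : E} (hy : ‖y‖ ≤ ε) :
    |inner ℝ x (B x x + (2:ℝ) • B x y + B y y - ε • A x - ε • A y)|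
      ≤ ε * (3 * M + 2 * ‖A‖) * (‖x‖ ^ 2 + ε) := by
  set R := (2:ℝ) • B x y + B y y - ε • A x - ε • A y
  have hR : ‖R‖ ≤ ε * ((2 * M + ‖A‖) * ‖x‖ + (M + ‖A‖) * ε) := by
    have h2 : ‖(2:ℝ) • B x y‖ = 2 * ‖B x y‖ := by simp [norm_smul]
    have hAx : ‖ε • A x‖ = ε * ‖A x‖ := by simp [norm_smul, abs_of_nonneg hε]
    have hAy : ‖ε • A y‖ = ε * ‖A y‖ := by simp [norm_smul, abs_of_nonneg hε]
    calc ‖R‖ ≤ 2 * ‖B x y‖ + ‖B y y‖ + ε * ‖A x‖ + ε * ‖A y‖ := by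
          linarith [norm_sub_le ((2:ℝ) • B x y + B y y - ε • A x) (ε • A y),
            norm_sub_le ((2:ℝ) • B x y + B y y) (ε • A x), norm_add_le ((2:ℝ) • B x y) (B y y)]
      _ ≤ 2 * (M * ‖x‖ * ε) + M * ε * ε + ε * (‖A‖ * ‖x‖) + ε * (‖A‖ * ε) := by
          gcongr
          · exact (hB x y).trans (by gcongr)
          · exact (hB y y).trans (by gcongr)
          · exact A.le_opNorm x
          · exact (A.le_opNorm y).trans (by gcongr)
      _ = ε * ((2 * M + ‖A‖) * ‖x‖ + (M + ‖A‖) * ε) := by ring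
  have hcancel : inner ℝ x (B x x + (2:ℝ) • B x y + B y y - ε • A x - ε • A y) = inner ℝ x R := by
    simp only [R, add_sub_assoc, add_assoc, inner_add_right, hBenergy, zero_add]
  have hcross : ε * ‖x‖ ≤ ‖x‖ ^ 2 + ε := by nlinarith [sq_nonneg (‖x‖ - ε), norm_nonneg x]
  calc |inner ℝ x (B x x + (2:ℝ) • B x y + B y y - ε • A x - ε • A y)|
      ≤ ‖x‖ * ‖R‖ := hcancel ▸ abs_real_inner_le_norm x R
    _ ≤ ‖x‖ * (ε * ((2 * M + ‖A‖) * ‖x‖ + (M + ‖A‖) * ε)) := by gcongr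
    _ ≤ ε * (3 * M + 2 * ‖A‖) * (‖x‖ ^ 2 + ε) := by
        have hMA : 0 ≤ M + ‖A‖ := add_nonneg hM (norm_nonneg A)
        nlinarith [mul_le_mul_of_nonneg_left hcross (mul_nonneg hε hMA),
          mul_nonneg (mul_nonneg hε hε) (add_nonneg hM hMA)]

theorem stmt3_general (d : ℕ)
    (B : EuclideanSpace ℝ (Fin d) → EuclideanSpace ℝ (Fin d) → EuclideanSpace ℝ (Fin d))
    (hBadd : ∀ x y z, B (x + y) z = B x z + B y z)
    (hBsmul : ∀ (c : ℝ) (x y), B (c • x) y = c • B x y)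
    (hBsymm : ∀ x y, B x y = B y x)
    (hBenergy : ∀ x, (inner ℝ x (B x x) : ℝ) = 0)
    (A : EuclideanSpace ℝ (Fin d) →L[ℝ] EuclideanSpace ℝ (Fin d)) :
    ∃ C : ℝ, 1 ≤ C ∧
      ∀ (ε T : ℝ) (u F : ℝ → EuclideanSpace ℝ (Fin d)),
        0 < ε → ε < 1 → 0 < T →
        ContinuousOn F (Set.Icc 0 T) →
        (∀ t ∈ Set.Icc 0 T, ‖F t‖ ≤ ε) →
        (∀ t ∈ Set.Icc 0 T, HasDerivAt u
          (B (u t) (u t) + (2:ℝ) • B (u t) (F t) + B (F t) (F t)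
            - ε • A (u t) - ε • A (F t)) t) →
        ∀ t ∈ Set.Icc 0 T,
          Real.exp (-(ε * C * t)) * ‖u 0‖ - Real.sqrt ε ≤ ‖u t‖ ∧
          ‖u t‖ ≤ Real.exp (ε * C * t) * (‖u 0‖ + Real.sqrt ε) := by
  obtain ⟨M, hM, hMB⟩ := exists_norm_le_of_symmetric_bilinear B hBadd hBsmul hBsymm
  refine ⟨3 * M + 2 * ‖A‖ + 1, by linarith [norm_nonneg A], ?_⟩
  intro ε T u F hε hε1 _ _ hF hu t ht
  set C := 3 * M + 2 * ‖A‖ + 1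
  have henergy : ∀ s ∈ Icc 0 T, HasDerivAt (fun s => ‖u s‖ ^ 2 + ε) _ s :=
    fun s hs => ((hu s hs).norm_sq).add_const ε
  have hpos : ∀ s, 0 ≤ ‖u s‖ ^ 2 + ε := fun s => add_nonneg (sq_nonneg _) hε.le
  have hbound : ∀ s ∈ Icc 0 T, ‖2 * inner ℝ (u s) (B (u s) (u s) + (2:ℝ) • B (u s) (F s)
      + B (F s) (F s) - ε • A (u s) - ε • A (F s))‖ ≤ 2 * (ε * C) * ‖‖u s‖ ^ 2 + ε‖ := by
    intro s hs
    rw [Real.norm_eq_abs, Real.norm_eq_abs, abs_mul, abs_two, abs_of_nonneg (hpos s)]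
    calc _ ≤ 2 * (ε * (3 * M + 2 * ‖A‖) * (‖u s‖ ^ 2 + ε)) := by
          gcongr; exact abs_inner_drift_le hM hMB hBenergy hε.le hε1.le (u s) (hF s hs)
      _ ≤ 2 * (ε * C * (‖u s‖ ^ 2 + ε)) := by gcongr; linarith
      _ = _ := by ring
  have hup := norm_le_norm_mul_exp_of_norm_deriv_le henergy hbound ht
  have hlow := norm_mul_exp_neg_le_of_norm_deriv_le henergy hbound ht
  simp only [Real.norm_eq_abs, abs_of_nonneg (hpos _)] at hup hlow
  constructor
  · refine mul_sub_sqrt_le_of_le_sq_add (norm_nonneg _) hε.le ?_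
    convert hlow using 1
    rw [sq, ← exp_add]; ring_nf
  · refine le_mul_add_sqrt_of_sq_add_le (norm_nonneg _) hε.le (exp_nonneg _) ?_
    convert hup using 1
    rw [sq, ← exp_add]; ring_nf

theorem stmt3 (d : ℕ)
    (B : EuclideanSpace ℝ (Fin d) → EuclideanSpace ℝ (Fin d) → EuclideanSpace ℝ (Fin d))
    (hBadd : ∀ x y z, B (x + y) z = B x z + B y z)
    (hBsmul : ∀ (c : ℝ) (x y), B (c • x) y = c • B x y)
    (hBsymm : ∀ x y, B x y = B y x)
    (hBenergy : ∀ x, (inner ℝ x (B x x) : ℝ) = 0)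
    (A : EuclideanSpace ℝ (Fin d) →L[ℝ] EuclideanSpace ℝ (Fin d))
    (hAsymm : ∀ x y, (inner ℝ (A x) y : ℝ) = (inner ℝ x (A y) : ℝ))
    (hApos : ∀ x, 0 ≤ (inner ℝ (A x) x : ℝ)) :
    ∃ C : ℝ, 1 ≤ C ∧
      ∀ (ε T : ℝ) (u F : ℝ → EuclideanSpace ℝ (Fin d)),
        0 < ε → ε < 1 → 0 < T →
        ContinuousOn F (Set.Icc 0 T) →
        (∀ t ∈ Set.Icc 0 T, ‖F t‖ ≤ ε) →
        (∀ t ∈ Set.Icc 0 T, HasDerivAt u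
          (B (u t) (u t) + (2:ℝ) • B (u t) (F t) + B (F t) (F t)
            - ε • A (u t) - ε • A (F t)) t) →
        ∀ t ∈ Set.Icc 0 T,
          Real.exp (-(ε * C * t)) * ‖u 0‖ - Real.sqrt ε ≤ ‖u t‖ ∧
          ‖u t‖ ≤ Real.exp (ε * C * t) * (‖u 0‖ + Real.sqrt ε) :=
  stmt3_general d B hBadd hBsmul hBsymm hBenergy A
end

section
/- For every ε > 0, M > 0 and m ≥ 1 there exists δ > 0 with the following property. Let A be a real m×m matrix with trace zero such that |v·Av| < δ for a given unit vector v ∈ ℝ^m, ‖A‖ ≤ M, and the symmetrization A_sym = (A + Aᵀ)/2 is invertible with ‖A_sym^{-1}‖ ≤ M. Then there exists a vector p ∈ ℝ^m with ‖p − v‖ < ε and p·Ap = 0. -/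
/-!
Write `S = (A + A*)/2` and move from `v` along the unit vector `w = S v / ‖S v‖`. Along this line
`⟪p, A p⟫` is the quadratic `a η² + b η + c` with `a = ⟪w, A w⟫`, `c = ⟪v, A v⟫` and linear
coefficient `b = 2 ⟪w, S v⟫ = 2 ‖S v‖`. Since `|a| ≤ ‖A‖ ≤ M`, `|c| < δ` and `b ≥ 2 / M`, the
intermediate value theorem yields a root with `|η| ≤ M δ`, which is small once `δ` is.
-/

open scoped RealInnerProductSpace

lemma exists_abs_le_quadratic_eq_zero {a b c t : ℝ} (ht : 0 ≤ t)
    (h : |a| * t ^ 2 + |c| ≤ b * t) : ∃ η, |η| ≤ t ∧ a * η ^ 2 + b * η + c = 0 := by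
  have hneg : a * (-t) ^ 2 + b * (-t) + c ≤ 0 := by
    nlinarith [le_abs_self a, le_abs_self c, sq_nonneg t]
  have hpos : 0 ≤ a * t ^ 2 + b * t + c := by
    nlinarith [neg_abs_le a, neg_abs_le c, sq_nonneg t]
  obtain ⟨η, hη, hroot⟩ := intermediate_value_Icc (by linarith : -t ≤ t)
    (f := fun η => a * η ^ 2 + b * η + c) (by fun_prop) ⟨hneg, hpos⟩
  exact ⟨η, abs_le.mpr hη, hroot⟩

section

variable {E : Type*} [NormedAddCommGroup E] [InnerProductSpace ℝ E]

lemma inner_add_smul_apply_add_smul (A : E →L[ℝ] E) (v w : E) (η : ℝ) :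
    ⟪v + η • w, A (v + η • w)⟫ = ⟪w, A w⟫ * η ^ 2 + (⟪v, A w⟫ + ⟪w, A v⟫) * η + ⟪v, A v⟫ := by
  simp only [map_add, map_smul, inner_add_left, inner_add_right, real_inner_smul_left,
    real_inner_smul_right]
  ring

lemma abs_inner_apply_le_opNorm (A : E →L[ℝ] E) {w : E} (hw : ‖w‖ = 1) : |⟪w, A w⟫| ≤ ‖A‖ := by
  calc |⟪w, A w⟫| ≤ ‖w‖ * ‖A w‖ := abs_real_inner_le_norm _ _
    _ ≤ ‖w‖ * (‖A‖ * ‖w‖) := by gcongr; exact A.le_opNorm w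
    _ = ‖A‖ := by rw [hw]; ring

variable [CompleteSpace E]

lemma inner_apply_add_inner_apply_eq_two_mul_inner_symm (A : E →L[ℝ] E) (v w : E) :
    ⟪v, A w⟫ + ⟪w, A v⟫ =
      2 * ⟪w, ((1/2 : ℝ) • (A + ContinuousLinearMap.adjoint A)) v⟫ := by
  simp only [smul_apply, add_apply, real_inner_smul_right,
    inner_add_right, ContinuousLinearMap.adjoint_inner_right, real_inner_comm v (A w)]
  ring

lemma exists_inner_apply_self_eq_zero_near (A : E →L[ℝ] E) (v : E) {M δ : ℝ}
    (hA : ‖A‖ ≤ M) (hSv : 1 ≤ M * ‖((1/2 : ℝ) • (A + ContinuousLinearMap.adjoint A)) v‖)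
    (hc : |⟪v, A v⟫| ≤ δ) (hδ : M ^ 3 * δ ≤ 1 / 2) :
    ∃ p : E, ‖p - v‖ ≤ M * δ ∧ ⟪p, A p⟫ = 0 := by
  set Sv := ((1/2 : ℝ) • (A + ContinuousLinearMap.adjoint A)) v
  have hM : 0 ≤ M := (norm_nonneg A).trans hA
  have hδ₀ : 0 ≤ δ := (abs_nonneg _).trans hc
  have hSv₀ : 0 < ‖Sv‖ := by
    by_contra! h
    nlinarith [norm_nonneg Sv]
  set w := ‖Sv‖⁻¹ • Sv
  have hw : ‖w‖ = 1 := by rw [norm_smul, norm_inv, norm_norm, inv_mul_cancel₀ hSv₀.ne']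
  have hb : ⟪v, A w⟫ + ⟪w, A v⟫ = 2 * ‖Sv‖ := by
    rw [inner_apply_add_inner_apply_eq_two_mul_inner_symm, real_inner_smul_left,
      real_inner_self_eq_norm_sq]
    field_simp
  have ha : |⟪w, A w⟫| ≤ M := (abs_inner_apply_le_opNorm A hw).trans hA
  have hroot : |⟪w, A w⟫| * (M * δ) ^ 2 + |⟪v, A v⟫| ≤ 2 * ‖Sv‖ * (M * δ) := by
    have hquad : |⟪w, A w⟫| * (M * δ) ^ 2 ≤ δ / 2 := by
      calc |⟪w, A w⟫| * (M * δ) ^ 2 ≤ M * (M * δ) ^ 2 := by gcongr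
        _ = (M ^ 3 * δ) * δ := by ring
        _ ≤ 1 / 2 * δ := by gcongr
        _ = δ / 2 := by ring
    nlinarith [mul_le_mul_of_nonneg_right hSv hδ₀]
  obtain ⟨η, hη, hzero⟩ := exists_abs_le_quadratic_eq_zero (by positivity) hroot
  refine ⟨v + η • w, ?_, ?_⟩
  · simpa [norm_smul, hw] using hη
  · rw [inner_add_smul_apply_add_smul, hb, hzero]

end

theorem stmt4_general (ε M : ℝ) (hε : 0 < ε) (hM : 0 < M) (m : ℕ) :
    ∃ δ : ℝ, 0 < δ ∧
      ∀ (A : EuclideanSpace ℝ (Fin m) →L[ℝ] EuclideanSpace ℝ (Fin m))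
        (v : EuclideanSpace ℝ (Fin m)),
        -- `A` has trace zero
        LinearMap.trace ℝ (EuclideanSpace ℝ (Fin m)) (↑A) = 0 →
        -- `v` is a unit vector with `|v · A v| < δ`
        ‖v‖ = 1 →
        |(inner ℝ v (A v) : ℝ)| < δ →
        -- operator norm bound on `A`
        ‖A‖ ≤ M →
        -- the symmetrization `A_sym = (A + Aᵀ)/2` is invertible with `‖A_sym⁻¹‖ ≤ M`
        Function.Bijective ((1/2 : ℝ) • (A + ContinuousLinearMap.adjoint A)) →
        (∀ x, ‖x‖ ≤ M * ‖((1/2 : ℝ) • (A + ContinuousLinearMap.adjoint A)) x‖) →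
        ∃ p : EuclideanSpace ℝ (Fin m), ‖p - v‖ < ε ∧ (inner ℝ p (A p) : ℝ) = 0 := by
  set δ := min (ε / (2 * M)) (1 / (2 * M ^ 3))
  refine ⟨δ, by positivity, fun A v _ hv hc hA _ hinv => ?_⟩
  have hSv := hinv v
  rw [hv] at hSv
  have hδ : M ^ 3 * δ ≤ 1 / 2 := by
    calc M ^ 3 * δ ≤ M ^ 3 * (1 / (2 * M ^ 3)) := by gcongr; exact min_le_right _ _
      _ = 1 / 2 := by field_simp
  have hMδ : M * δ < ε := by
    calc M * δ ≤ M * (ε / (2 * M)) := by gcongr; exact min_le_left _ _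
      _ = ε / 2 := by field_simp
      _ < ε := by linarith
  obtain ⟨p, hp, hzero⟩ := exists_inner_apply_self_eq_zero_near A v hA hSv hc.le hδ
  exact ⟨p, hp.trans_lt hMδ, hzero⟩

theorem stmt4 (ε M : ℝ) (hε : 0 < ε) (hM : 0 < M) (m : ℕ) (hm : 1 ≤ m) :
    ∃ δ : ℝ, 0 < δ ∧
      ∀ (A : EuclideanSpace ℝ (Fin m) →L[ℝ] EuclideanSpace ℝ (Fin m))
        (v : EuclideanSpace ℝ (Fin m)),
        -- `A` has trace zero
        LinearMap.trace ℝ (EuclideanSpace ℝ (Fin m)) (↑A) = 0 →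
        -- `v` is a unit vector with `|v · A v| < δ`
        ‖v‖ = 1 →
        |(inner ℝ v (A v) : ℝ)| < δ →
        -- operator norm bound on `A`
        ‖A‖ ≤ M →
        -- the symmetrization `A_sym = (A + Aᵀ)/2` is invertible with `‖A_sym⁻¹‖ ≤ M`
        Function.Bijective ((1/2 : ℝ) • (A + ContinuousLinearMap.adjoint A)) →
        (∀ x, ‖x‖ ≤ M * ‖((1/2 : ℝ) • (A + ContinuousLinearMap.adjoint A)) x‖) →
        ∃ p : EuclideanSpace ℝ (Fin m), ‖p - v‖ < ε ∧ (inner ℝ p (A p) : ℝ) = 0 :=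
  stmt4_general ε M hε hM m
end

section
/- Let m ≥ 3 and let H_m denote the linear space of real m×m matrices whose diagonal entries all vanish (hollow matrices). Then the set of A ∈ H_m whose spectrum is disjoint from the imaginary axis iℝ is dense in H_m. (In fact it is open, dense, and of full Lebesgue measure in H_m.) -/
/-!
Identify a matrix `X` with its vectorisation: the Kronecker sum `B ⊕ B = B ⊗ 1 + 1 ⊗ B` acts as
`X ↦ B X + X Bᵀ`, so it is singular as soon as `B` has eigenvalues `z` and `-z` (take
`X = u vᵀ` for the eigenvectors). A real matrix with an eigenvalue `z ∈ iℝ` also has the eigenvalue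
`z̄ = -z`, so it suffices to find hollow `B` near `A` with `det (B ⊕ B) ≠ 0`. Take
`B = A + t S` with `S = J - 1` the hollow all-ones matrix: `t ↦ det ((A + t S) ⊕ (A + t S))` is,
up to a factor, a characteristic polynomial as soon as `det (S ⊕ S) ≠ 0`, hence it has finitely
many zeros. Finally `S X + X S = 0` forces `X = 0` when `m ≥ 3`, using only `J² = m J`.
-/

open Matrix Complex
open scoped Kronecker

theorem eq_zero_of_mul_add_mul_eq_two_smul {K A : Type*} [Field K] [NeZero (2 : K)] [Ring A]
    [Algebra K A] {J X : A} {c : K} (hJJ : J * J = c • J) (hc1 : c ≠ 1) (hc2 : c ≠ 2)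
    (h : J * X + X * J = (2 : K) • X) : X = 0 := by
  have hL : (c - 2) • (J * X) = -(J * X * J) := by
    have := congrArg (J * ·) h
    simp only [mul_add, mul_smul_comm, ← mul_assoc, hJJ, smul_mul_assoc] at this
    linear_combination (norm := module) this
  have hR : (c - 2) • (X * J) = -(J * X * J) := by
    have := congrArg (· * J) h
    simp only [add_mul, smul_mul_assoc, mul_assoc, hJJ, mul_smul_comm] at this
    simp only [← mul_assoc] at this
    linear_combination (norm := module) this
  have hJXJ : J * X * J = 0 := by
    have := congrArg (· * J) hL
    simp only [smul_mul_assoc, neg_mul, mul_assoc, hJJ, mul_smul_comm] at this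
    simp only [← mul_assoc] at this
    have h2 : (2 * (c - 1)) • (J * X * J) = 0 := by linear_combination (norm := module) this
    exact (smul_eq_zero.1 h2).resolve_left (mul_ne_zero two_ne_zero (sub_ne_zero.2 hc1))
  rw [hJXJ, neg_zero, smul_eq_zero] at hL hR
  have hc : c - 2 ≠ 0 := sub_ne_zero.2 hc2
  rw [hL.resolve_left hc, hR.resolve_left hc, add_zero, eq_comm, smul_eq_zero] at h
  exact h.resolve_left two_ne_zero

namespace Matrix

theorem of_one_mul_of_one {n R : Type*} [Fintype n] [Semiring R] :
    (of fun _ _ => 1 : Matrix n n R) * of (fun _ _ => 1) =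
      (Fintype.card n : R) • of fun _ _ => 1 := by
  ext i j
  simp [mul_apply]

variable {n : Type*} [DecidableEq n]

def kroneckerSum {R : Type*} [CommRing R] (B : Matrix n n R) : Matrix (n × n) (n × n) R :=
  B ⊗ₖ 1 + 1 ⊗ₖ B

theorem kroneckerSum_add_smul {R : Type*} [CommRing R] (M N : Matrix n n R) (c : R) :
    kroneckerSum (M + c • N) = kroneckerSum M + c • kroneckerSum N := by
  simp only [kroneckerSum, add_kronecker, kronecker_add, smul_kronecker, kronecker_smul, smul_add]
  abel

variable [Fintype n]

theorem kroneckerSum_mulVec_vec {R : Type*} [CommRing R] (B X : Matrix n n R) :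
    kroneckerSum B *ᵥ vec X = vec (B * X + X * Bᵀ) := by
  rw [kroneckerSum, add_mulVec, kronecker_mulVec_vec, kronecker_mulVec_vec, ← vec_add]
  simp [add_comm]

section Field

variable {K : Type*} [Field K]

theorem det_kroneckerSum_eq_zero_iff (B : Matrix n n K) :
    (kroneckerSum B).det = 0 ↔ ∃ X : Matrix n n K, X ≠ 0 ∧ B * X + X * Bᵀ = 0 := by
  rw [← exists_mulVec_eq_zero_iff, vec_bijective.surjective.exists]
  simp only [kroneckerSum_mulVec_vec, ne_eq, vec_eq_zero_iff]

theorem det_kroneckerSum_eq_zero_of_mulVec_eq_smul {B : Matrix n n K} {u v : n → K} {z : K}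
    (hu : u ≠ 0) (hv : v ≠ 0) (hBu : B *ᵥ u = z • u) (hBv : B *ᵥ v = -z • v) :
    (kroneckerSum B).det = 0 := by
  refine (det_kroneckerSum_eq_zero_iff B).2 ⟨vecMulVec u v, vecMulVec_ne_zero hu hv, ?_⟩
  rw [mul_vecMulVec, vecMulVec_mul, vecMul_transpose, hBu, hBv]
  ext i j
  simp [vecMulVec_apply]

theorem det_kroneckerSum_of_one_sub_one_ne_zero [CharZero K] (hn : 3 ≤ Fintype.card n) :
    (kroneckerSum (of (fun _ _ => 1) - 1 : Matrix n n K)).det ≠ 0 := by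
  rw [Ne, det_kroneckerSum_eq_zero_iff]
  rintro ⟨X, hX, hS⟩
  refine hX (eq_zero_of_mul_add_mul_eq_two_smul of_one_mul_of_one
    (by exact_mod_cast (by omega : Fintype.card n ≠ 1))
    (by exact_mod_cast (by omega : Fintype.card n ≠ 2)) ?_)
  have hJt : (of fun _ _ => 1 : Matrix n n K)ᵀ = of fun _ _ => 1 := rfl
  rw [transpose_sub, transpose_one, hJt, sub_mul, mul_sub, one_mul, mul_one] at hS
  rw [two_smul, ← sub_eq_zero, ← hS]
  abel

theorem finite_setOf_det_add_smul_eq_zero (M N : Matrix n n K) (hN : IsUnit N.det) :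
    {t : K | (M + t • N).det = 0}.Finite := by
  refine (finite_spectrum (-(N⁻¹ * M))).subset fun t ht => ?_
  have : algebraMap K (Matrix n n K) t - -(N⁻¹ * M) = N⁻¹ * (M + t • N) := by
    rw [Algebra.algebraMap_eq_smul_one, sub_neg_eq_add, mul_add, Matrix.mul_smul,
      nonsing_inv_mul N hN, add_comm]
  rw [spectrum.mem_iff, this, isUnit_iff_isUnit_det, det_mul, ht.out, mul_zero]
  exact not_isUnit_zero

end Field

theorem finite_setOf_det_kroneckerSum_map_ofReal_eq_zero (M N : Matrix n n ℝ)
    (hN : IsUnit (kroneckerSum (N.map ofReal)).det) :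
    {t : ℝ | (kroneckerSum ((M + t • N).map ofReal)).det = 0}.Finite := by
  have hmap (t : ℝ) : (M + t • N).map ofReal = M.map ofReal + (t : ℂ) • N.map ofReal := by
    ext i j
    simp
  refine ((finite_setOf_det_add_smul_eq_zero (kroneckerSum (M.map ofReal)) _ hN).preimage
    ofReal_injective.injOn).subset fun t ht => ?_
  rwa [Set.mem_ofPred_eq, hmap, kroneckerSum_add_smul] at ht

theorem re_ne_zero_of_mem_spectrum_map_ofReal {B : Matrix n n ℝ}
    (hB : (kroneckerSum (B.map ofReal)).det ≠ 0) {z : ℂ} (hz : z ∈ spectrum ℂ (B.map ofReal)) :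
    z.re ≠ 0 := by
  intro hre
  rw [← spectrum_toLin', ← Module.End.hasEigenvalue_iff_mem_spectrum] at hz
  obtain ⟨v, hv⟩ := hz.exists_hasEigenvector
  have hBv : B.map ofReal *ᵥ v = z • v := hv.apply_eq_smul
  have hBv' : B.map ofReal *ᵥ star v = -z • star v := by
    have hz' : star z = -z := by apply Complex.ext <;> simp [hre]
    rw [← hz', ← star_smul, ← hBv]
    ext i
    simp [mulVec, dotProduct]
  exact hB (det_kroneckerSum_eq_zero_of_mulVec_eq_smul hv.2 (star_ne_zero.2 hv.2) hBv hBv')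

end Matrix

theorem stmt6 (m : ℕ) (hm : 3 ≤ m)
    (A : Matrix (Fin m) (Fin m) ℝ) (hA : ∀ i, A i i = 0)
    (ε : ℝ) (hε : 0 < ε) :
    ∃ B : Matrix (Fin m) (Fin m) ℝ,
      (∀ i, B i i = 0) ∧
      (∀ i j, |B i j - A i j| < ε) ∧
      (∀ z ∈ spectrum ℂ (B.map Complex.ofReal), z.re ≠ 0) := by
  set S : Matrix (Fin m) (Fin m) ℝ := of (fun _ _ => 1) - 1
  have hS : IsUnit (kroneckerSum (S.map ofReal)).det := by
    have hSℂ : S.map ofReal = of (fun _ _ => 1) - 1 := by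
      ext i j
      by_cases hij : i = j <;> simp [S, one_apply, hij]
    rw [hSℂ, isUnit_iff_ne_zero]
    exact det_kroneckerSum_of_one_sub_one_ne_zero (by simpa using hm)
  obtain ⟨t, ⟨ht0, htε⟩, ht⟩ := ((Set.Ioo_infinite hε).sdiff
    (finite_setOf_det_kroneckerSum_map_ofReal_eq_zero A S hS)).nonempty
  refine ⟨A + t • S, fun i => by simp [S, hA], fun i j => ?_,
    fun z hz => re_ne_zero_of_mem_spectrum_map_ofReal ht hz⟩
  by_cases hij : i = j
  · simpa [S, hij] using hε
  · simpa [S, hij, abs_of_pos ht0] using htε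
end

section
/- Let b ∈ B be a tensor in the constraint class and fix q ≥ 3 and x ∈ ℝ^d with x^i ≠ 0 for all i ∈ {1,…,q} and x^i = 0 for i > q. Write ẋ = B_b(x,x). Suppose ẋ^{k₁} x^{k₂} = x^{k₁} ẋ^{k₂} for all 1 ≤ k₁,k₂ ≤ q (i.e., ẋ^1/x^1 = ⋯ = ẋ^q/x^q). Then ẋ^j = 0 for all 1 ≤ j ≤ q. -/
open scoped BigOperators

lemma energy {d : ℕ} (b : Fin d → Fin d → Fin d → ℝ)
    (hcyc : ∀ i j k : Fin d, b i j k + b j i k + b k i j = 0)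
    (x : Fin d → ℝ) : ∑ i, x i * Bb b x x i = 0 := by
  have hS : ∑ i, x i * Bb b x x i
      = ∑ i, ∑ j, ∑ k, b i j k * x i * x j * x k := by
    refine Finset.sum_congr rfl fun i _ => ?_
    simp only [Bb, Finset.mul_sum]
    refine Finset.sum_congr rfl fun j _ => Finset.sum_congr rfl fun k _ => by ring
  have h2 : ∑ i, ∑ j, ∑ k, b j i k * x i * x j * x k
      = ∑ i, ∑ j, ∑ k, b i j k * x i * x j * x k := by
    rw [Finset.sum_comm]
    refine Finset.sum_congr rfl fun i _ => Finset.sum_congr rfl fun j _ =>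
      Finset.sum_congr rfl fun k _ => by ring
  have h3 : ∑ i, ∑ j, ∑ k, b k i j * x i * x j * x k
      = ∑ i, ∑ j, ∑ k, b i j k * x i * x j * x k := by
    have step1 : ∑ i, ∑ j, ∑ k, b k i j * x i * x j * x k
        = ∑ i, ∑ k, ∑ j, b k i j * x i * x j * x k :=
      Finset.sum_congr rfl fun i _ => Finset.sum_comm
    rw [step1, Finset.sum_comm]
    refine Finset.sum_congr rfl fun i _ => Finset.sum_congr rfl fun j _ =>
      Finset.sum_congr rfl fun k _ => by ring
  have h0 : (∑ i, ∑ j, ∑ k, b i j k * x i * x j * x k)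
      + (∑ i, ∑ j, ∑ k, b j i k * x i * x j * x k)
      + (∑ i, ∑ j, ∑ k, b k i j * x i * x j * x k) = 0 := by
    rw [← Finset.sum_add_distrib, ← Finset.sum_add_distrib]
    refine Finset.sum_eq_zero fun i _ => ?_
    rw [← Finset.sum_add_distrib, ← Finset.sum_add_distrib]
    refine Finset.sum_eq_zero fun j _ => ?_
    rw [← Finset.sum_add_distrib, ← Finset.sum_add_distrib]
    refine Finset.sum_eq_zero fun k _ => ?_
    linear_combination (x i * x j * x k) * hcyc i j k
  rw [hS]
  rw [h2, h3] at h0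
  linarith

theorem stmt14 (d q : ℕ) (hq : 3 ≤ q) (hqd : q ≤ d)
    (b : Fin d → Fin d → Fin d → ℝ)
    -- `b` belongs to the constraint class `𝓑`
    (hsym : ∀ i j k, b i j k = b i k j)
    (hzero : ∀ i j : Fin d, b i i i = 0 ∧ b i i j = 0 ∧ b i j j = 0)
    (hcyc : ∀ i j k : Fin d, b i j k + b j i k + b k i j = 0)
    -- `x^i ≠ 0` for `i ∈ {1,…,q}` and `x^i = 0` for `i > q`
    (x : Fin d → ℝ)
    (hxne : ∀ i : Fin d, (i : ℕ) < q → x i ≠ 0)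
    (hxzero : ∀ i : Fin d, q ≤ (i : ℕ) → x i = 0)
    -- `ẋ^{k₁} x^{k₂} = x^{k₁} ẋ^{k₂}` for all `k₁, k₂ ∈ {1,…,q}`, with `ẋ = B_b(x,x)`
    (hpar : ∀ k₁ k₂ : Fin d, (k₁ : ℕ) < q → (k₂ : ℕ) < q →
      Bb b x x k₁ * x k₂ = x k₁ * Bb b x x k₂) :
    ∀ j : Fin d, (j : ℕ) < q → Bb b x x j = 0 := by
  intro j hj
  have hE := energy b hcyc x
  have key : Bb b x x j * ∑ k, x k * x k = 0 := by
    have : ∑ k, Bb b x x j * (x k * x k) = ∑ k, x j * (x k * Bb b x x k) := by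
      refine Finset.sum_congr rfl fun k _ => ?_
      by_cases hk : (k : ℕ) < q
      · have := hpar j k hj hk
        linear_combination x k * this
      · rw [hxzero k (le_of_not_gt hk)]; ring
    calc Bb b x x j * ∑ k, x k * x k = ∑ k, Bb b x x j * (x k * x k) := by
          rw [Finset.mul_sum]
      _ = ∑ k, x j * (x k * Bb b x x k) := this
      _ = x j * ∑ k, x k * Bb b x x k := by rw [Finset.mul_sum]
      _ = 0 := by rw [hE, mul_zero]
  have hpos : (0:ℝ) < ∑ k, x k * x k := by
    have hjx : 0 < x j * x j := mul_self_pos.mpr (hxne j hj)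
    have hle : x j * x j ≤ ∑ k, x k * x k :=
      Finset.single_le_sum (fun k _ => mul_self_nonneg (x k)) (Finset.mem_univ j)
    linarith
  have := mul_eq_zero.mp key
  rcases this with h | h
  · exact h
  · exact absurd h (ne_of_gt hpos)
end

section
/- Let A be a real d×d matrix and suppose ℝ^d = E_u ⊕ E_s ⊕ E_c with projections Π_u, Π_s, Π_c, and c > 0, such that for all x ∈ ℝ^d: (R x)·(Π_u x) ≥ c|Π_u x|² when x ∈ E_u, (R x)·(Π_s x) ≤ −c|Π_s x|² when x ∈ E_s, and R x = 0 for x ∈ E_c, where R = A. Let h : [0,T] → ℝ^d be C¹ and satisfy dh/dt = R h(t) + g(t) where |g(t)| ≤ κ|h(t)| with κ < c/4 sufficiently small. Define Φ(t) = |Π_u h(t)|² − |Π_s h(t)|² − |Π_c h(t)|². If Φ(0) > 0, then Φ(t) ≥ e^{c t/2} Φ(0) for all t ∈ [0,T] such that Φ remains positive on [0,t]; consequently |Π_u h(t)|² ≥ e^{ct/2}Φ(0) on that interval. -/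
/-!
Along a solution of `h' = R h + g`, the derivative of the cone functional `Φ` is
`2 (⟪Pu h, Pu (R h)⟫ - ⟪Ps h, Ps (R h)⟫ - ⟪Pc h, Pc (R h)⟫)` plus a perturbation term. The
linear part is at least `2c (‖Pu h‖² + ‖Ps h‖²)`, while inside the cone `Φ > 0` every component
of `h`, and `h` itself, is controlled by `‖Pu h‖`, so the perturbation costs at most
`12 κ ‖Pu h‖²`. For `κ ≤ c/8` this gives `Φ' ≥ (c/2) Φ` as long as `Φ > 0`, and the
exponential lower bound follows from the monotonicity of `e^{-ct/2} Φ(t)`.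
-/

open scoped RealInnerProductSpace

theorem exp_mul_sub_mul_le_of_mul_le_deriv {f f' : ℝ → ℝ} {k a b : ℝ} (hab : a ≤ b)
    (hf : ∀ s ∈ Set.Icc a b, HasDerivAt f (f' s) s)
    (hbound : ∀ s ∈ Set.Icc a b, k * f s ≤ f' s) :
    Real.exp (k * (b - a)) * f a ≤ f b := by
  have hψ : ∀ s ∈ Set.Icc a b,
      HasDerivAt (fun r => Real.exp (-k * r) * f r)
        (Real.exp (-k * s) * (f' s - k * f s)) s := fun s hs => by
    refine ((((hasDerivAt_id s).const_mul (-k)).exp).mul (hf s hs)).congr_deriv ?_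
    simp only [id, mul_one]
    ring
  have hmono : MonotoneOn (fun r => Real.exp (-k * r) * f r) (Set.Icc a b) := by
    refine monotoneOn_of_hasDerivWithinAt_nonneg (convex_Icc a b)
      (fun s hs => (hψ s hs).continuousAt.continuousWithinAt)
      (fun s hs => (hψ s (interior_subset hs)).hasDerivWithinAt) fun s hs => ?_
    have := hbound s (interior_subset hs)
    exact mul_nonneg (Real.exp_pos _).le (by linarith)
  have hab' := hmono (Set.left_mem_Icc.mpr hab) (Set.right_mem_Icc.mpr hab) hab
  calc Real.exp (k * (b - a)) * f a
      = Real.exp (k * b) * (Real.exp (-k * a) * f a) := by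
        rw [← mul_assoc, ← Real.exp_add]; ring_nf
    _ ≤ Real.exp (k * b) * (Real.exp (-k * b) * f b) :=
        mul_le_mul_of_nonneg_left hab' (Real.exp_pos _).le
    _ = f b := by rw [← mul_assoc, ← Real.exp_add]; simp

section ConeFunctional

variable {E : Type*} [NormedAddCommGroup E] [InnerProductSpace ℝ E] (Pu Ps Pc : E →L[ℝ] E)

def coneFunctional (x : E) : ℝ := ‖Pu x‖ ^ 2 - ‖Ps x‖ ^ 2 - ‖Pc x‖ ^ 2

def coneInner (x y : E) : ℝ := ⟪Pu x, Pu y⟫ - ⟪Ps x, Ps y⟫ - ⟪Pc x, Pc y⟫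

variable {Pu Ps Pc}

theorem coneInner_add_right (x y z : E) :
    coneInner Pu Ps Pc x (y + z) = coneInner Pu Ps Pc x y + coneInner Pu Ps Pc x z := by
  simp only [coneInner, map_add, inner_add_right]
  ring

theorem coneFunctional_le_norm_sq (x : E) : coneFunctional Pu Ps Pc x ≤ ‖Pu x‖ ^ 2 := by
  have := sq_nonneg ‖Ps x‖
  have := sq_nonneg ‖Pc x‖
  unfold coneFunctional
  linarith

theorem HasDerivAt.coneFunctional {h : ℝ → E} {v : E} {t : ℝ} (hh : HasDerivAt h v t) :
    HasDerivAt (fun s => coneFunctional Pu Ps Pc (h s)) (2 * coneInner Pu Ps Pc (h t) v) t := by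
  have hPu := (Pu.hasFDerivAt.comp_hasDerivAt t hh).norm_sq
  have hPs := (Ps.hasFDerivAt.comp_hasDerivAt t hh).norm_sq
  have hPc := (Pc.hasFDerivAt.comp_hasDerivAt t hh).norm_sq
  refine ((hPu.sub hPs).sub hPc).congr_deriv ?_
  simp only [coneInner, Function.comp_apply]
  ring

theorem inner_apply_apply_eq_zero_of_comp_eq_zero {P Q : E →L[ℝ] E}
    (hP : (P : E →ₗ[ℝ] E).IsSymmetric) (hPQ : P ∘L Q = 0) (x y : E) : ⟪P x, Q y⟫ = 0 := by
  calc ⟪P x, Q y⟫ = ⟪x, (P ∘L Q) y⟫ := hP x (Q y)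
    _ = 0 := by rw [hPQ, zero_apply, inner_zero_right]

theorem norm_sq_eq_of_add_eq_id (hsum : Pu + Ps + Pc = ContinuousLinearMap.id ℝ E)
    (hPu : (Pu : E →ₗ[ℝ] E).IsSymmetric) (hPs : (Ps : E →ₗ[ℝ] E).IsSymmetric)
    (hus : Pu ∘L Ps = 0) (huc : Pu ∘L Pc = 0) (hsc : Ps ∘L Pc = 0) (x : E) :
    ‖x‖ ^ 2 = ‖Pu x‖ ^ 2 + ‖Ps x‖ ^ 2 + ‖Pc x‖ ^ 2 := by
  have hx : Pu x + Ps x + Pc x = x := by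
    simpa using ContinuousLinearMap.ext_iff.mp hsum x
  calc ‖x‖ ^ 2 = ‖Pu x + Ps x + Pc x‖ ^ 2 := by rw [hx]
    _ = ‖Pu x‖ ^ 2 + ‖Ps x‖ ^ 2 + ‖Pc x‖ ^ 2 := by
      rw [norm_add_sq_real, norm_add_sq_real, inner_add_left,
        inner_apply_apply_eq_zero_of_comp_eq_zero hPu hus,
        inner_apply_apply_eq_zero_of_comp_eq_zero hPu huc,
        inner_apply_apply_eq_zero_of_comp_eq_zero hPs hsc]
      ring

theorem abs_coneInner_le (hpyth : ∀ y : E, ‖y‖ ^ 2 = ‖Pu y‖ ^ 2 + ‖Ps y‖ ^ 2 + ‖Pc y‖ ^ 2)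
    (x y : E) : |coneInner Pu Ps Pc x y| ≤ ‖y‖ * (‖Pu x‖ + ‖Ps x‖ + ‖Pc x‖) := by
  have hy := hpyth y
  have hPuy : ‖Pu y‖ ≤ ‖y‖ := by nlinarith [norm_nonneg (Pu y), norm_nonneg y]
  have hPsy : ‖Ps y‖ ≤ ‖y‖ := by nlinarith [norm_nonneg (Ps y), norm_nonneg y]
  have hPcy : ‖Pc y‖ ≤ ‖y‖ := by nlinarith [norm_nonneg (Pc y), norm_nonneg y]
  have hu := (abs_real_inner_le_norm (Pu x) (Pu y)).trans
    (mul_le_mul_of_nonneg_left hPuy (norm_nonneg _))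
  have hs := (abs_real_inner_le_norm (Ps x) (Ps y)).trans
    (mul_le_mul_of_nonneg_left hPsy (norm_nonneg _))
  have hc := (abs_real_inner_le_norm (Pc x) (Pc y)).trans
    (mul_le_mul_of_nonneg_left hPcy (norm_nonneg _))
  unfold coneInner
  rw [abs_le] at hu hs hc ⊢
  constructor <;> linarith

theorem mul_le_coneInner_apply_self {R : E →L[ℝ] E} {c : ℝ}
    (hRu : R ∘L Pu = Pu ∘L R) (hRs : R ∘L Ps = Ps ∘L R) (hRc : R ∘L Pc = Pc ∘L R)
    (hu : ∀ x, c * ‖Pu x‖ ^ 2 ≤ ⟪R (Pu x), Pu x⟫) (hs : ∀ x, ⟪R (Ps x), Ps x⟫ ≤ -c * ‖Ps x‖ ^ 2)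
    (hcz : ∀ x, R (Pc x) = 0) (x : E) :
    c * (‖Pu x‖ ^ 2 + ‖Ps x‖ ^ 2) ≤ coneInner Pu Ps Pc x (R x) := by
  have hRPu : Pu (R x) = R (Pu x) := (ContinuousLinearMap.ext_iff.mp hRu x).symm
  have hRPs : Ps (R x) = R (Ps x) := (ContinuousLinearMap.ext_iff.mp hRs x).symm
  have hRPc : Pc (R x) = R (Pc x) := (ContinuousLinearMap.ext_iff.mp hRc x).symm
  have hux := hu x
  have hsx := hs x
  rw [real_inner_comm] at hux hsx
  rw [coneInner, hRPu, hRPs, hRPc, hcz, inner_zero_right]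
  linarith

theorem half_mul_coneFunctional_le_two_mul_coneInner {R : E →L[ℝ] E} {c κ : ℝ} {x y : E}
    (hκ0 : 0 ≤ κ) (hκ : κ ≤ c / 8) (hcone : 0 < coneFunctional Pu Ps Pc x)
    (hy : ‖y‖ ≤ κ * ‖x‖) (hx : ‖x‖ ^ 2 = ‖Pu x‖ ^ 2 + ‖Ps x‖ ^ 2 + ‖Pc x‖ ^ 2)
    (hR : c * (‖Pu x‖ ^ 2 + ‖Ps x‖ ^ 2) ≤ coneInner Pu Ps Pc x (R x))
    (hpert : |coneInner Pu Ps Pc x y| ≤ ‖y‖ * (‖Pu x‖ + ‖Ps x‖ + ‖Pc x‖)) :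
    c / 2 * coneFunctional Pu Ps Pc x ≤ 2 * coneInner Pu Ps Pc x (R x + y) := by
  unfold coneFunctional at hcone ⊢
  set u := ‖Pu x‖
  set v := ‖Ps x‖
  set w := ‖Pc x‖
  have hu : 0 ≤ u := norm_nonneg _
  have hv : 0 ≤ v := norm_nonneg _
  have hw : 0 ≤ w := norm_nonneg _
  have hvu : v ≤ u := by nlinarith
  have hwu : w ≤ u := by nlinarith
  have hxu : ‖x‖ ≤ 2 * u := by nlinarith [norm_nonneg x]
  have hsum : u + v + w ≤ 3 * u := by linarith
  have hpert' : ‖y‖ * (u + v + w) ≤ 6 * κ * u ^ 2 :=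
    calc ‖y‖ * (u + v + w) ≤ (κ * (2 * u)) * (3 * u) := by gcongr; exact hy.trans (by gcongr)
      _ = 6 * κ * u ^ 2 := by ring
  rw [coneInner_add_right]
  nlinarith [abs_le.mp hpert, sq_nonneg v, sq_nonneg w]

end ConeFunctional

theorem stmt18_general (d : ℕ) (c : ℝ) (hc : 0 < c)
    (R Pu Ps Pc : EuclideanSpace ℝ (Fin d) →L[ℝ] EuclideanSpace ℝ (Fin d))
    -- `Pu, Ps, Pc` are the orthogonal projections of a decomposition
    -- `ℝ^d = E_u ⊕ E_s ⊕ E_c`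
    (hsum : Pu + Ps + Pc = ContinuousLinearMap.id ℝ (EuclideanSpace ℝ (Fin d)))
    (hus : Pu ∘L Ps = 0) (huc : Pu ∘L Pc = 0) (hsc : Ps ∘L Pc = 0)
    (hPusa : ∀ x y, (inner ℝ (Pu x) y : ℝ) = (inner ℝ x (Pu y) : ℝ))
    (hPssa : ∀ x y, (inner ℝ (Ps x) y : ℝ) = (inner ℝ x (Ps y) : ℝ))
    -- `R` respects the decomposition
    (hRu : R ∘L Pu = Pu ∘L R) (hRs : R ∘L Ps = Ps ∘L R) (hRc : R ∘L Pc = Pc ∘L R)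
    -- coercivity on `E_u`, dissipativity on `E_s`, and `R = 0` on `E_c`
    (hu : ∀ x, c * ‖Pu x‖ ^ 2 ≤ (inner ℝ (R (Pu x)) (Pu x) : ℝ))
    (hs : ∀ x, (inner ℝ (R (Ps x)) (Ps x) : ℝ) ≤ -c * ‖Ps x‖ ^ 2)
    (hcz : ∀ x, R (Pc x) = 0) :
    -- for `κ < c/4` sufficiently small, the cone functional
    -- `Φ(t) = ‖Pu h‖² − ‖Ps h‖² − ‖Pc h‖²` grows exponentially
    ∃ κ₀ : ℝ, 0 < κ₀ ∧ κ₀ ≤ c / 4 ∧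
      ∀ (κ T : ℝ) (h g : ℝ → EuclideanSpace ℝ (Fin d)),
        0 ≤ κ → κ ≤ κ₀ → 0 ≤ T →
        (∀ t ∈ Set.Icc 0 T, HasDerivAt h (R (h t) + g t) t) →
        (∀ t ∈ Set.Icc 0 T, ‖g t‖ ≤ κ * ‖h t‖) →
        0 < ‖Pu (h 0)‖ ^ 2 - ‖Ps (h 0)‖ ^ 2 - ‖Pc (h 0)‖ ^ 2 →
        ∀ t ∈ Set.Icc 0 T,
          (∀ s ∈ Set.Icc 0 t,
            0 < ‖Pu (h s)‖ ^ 2 - ‖Ps (h s)‖ ^ 2 - ‖Pc (h s)‖ ^ 2) →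
          Real.exp (c * t / 2) * (‖Pu (h 0)‖ ^ 2 - ‖Ps (h 0)‖ ^ 2 - ‖Pc (h 0)‖ ^ 2)
              ≤ ‖Pu (h t)‖ ^ 2 - ‖Ps (h t)‖ ^ 2 - ‖Pc (h t)‖ ^ 2 ∧
          Real.exp (c * t / 2) * (‖Pu (h 0)‖ ^ 2 - ‖Ps (h 0)‖ ^ 2 - ‖Pc (h 0)‖ ^ 2)
              ≤ ‖Pu (h t)‖ ^ 2 := by
  refine ⟨c / 8, by positivity, by linarith, ?_⟩
  intro κ T h g hκ0 hκ _ hderiv hg _ t ht hcone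
  have hsub : Set.Icc 0 t ⊆ Set.Icc 0 T := Set.Icc_subset_Icc le_rfl ht.2
  have hpyth := norm_sq_eq_of_add_eq_id hsum hPusa hPssa hus huc hsc
  have hgrowth := exp_mul_sub_mul_le_of_mul_le_deriv ht.1
    (fun s hst => (hderiv s (hsub hst)).coneFunctional)
    (fun s hst => half_mul_coneFunctional_le_two_mul_coneInner hκ0 hκ (hcone s hst)
      (hg s (hsub hst)) (hpyth _) (mul_le_coneInner_apply_self hRu hRs hRc hu hs hcz _)
      (abs_coneInner_le hpyth _ _))
  rw [sub_zero, ← mul_div_right_comm] at hgrowth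
  exact ⟨hgrowth, hgrowth.trans (coneFunctional_le_norm_sq _)⟩

theorem stmt18 (d : ℕ) (c : ℝ) (hc : 0 < c)
    (R Pu Ps Pc : EuclideanSpace ℝ (Fin d) →L[ℝ] EuclideanSpace ℝ (Fin d))
    -- `Pu, Ps, Pc` are the orthogonal projections of a decomposition
    -- `ℝ^d = E_u ⊕ E_s ⊕ E_c`
    (hsum : Pu + Ps + Pc = ContinuousLinearMap.id ℝ (EuclideanSpace ℝ (Fin d)))
    (hPu : Pu ∘L Pu = Pu) (hPs : Ps ∘L Ps = Ps) (hPc : Pc ∘L Pc = Pc)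
    (hus : Pu ∘L Ps = 0) (huc : Pu ∘L Pc = 0) (hsc : Ps ∘L Pc = 0)
    (hsu : Ps ∘L Pu = 0) (hcu : Pc ∘L Pu = 0) (hcs : Pc ∘L Ps = 0)
    (hPusa : ∀ x y, (inner ℝ (Pu x) y : ℝ) = (inner ℝ x (Pu y) : ℝ))
    (hPssa : ∀ x y, (inner ℝ (Ps x) y : ℝ) = (inner ℝ x (Ps y) : ℝ))
    (hPcsa : ∀ x y, (inner ℝ (Pc x) y : ℝ) = (inner ℝ x (Pc y) : ℝ))
    -- `R` respects the decomposition
    (hRu : R ∘L Pu = Pu ∘L R) (hRs : R ∘L Ps = Ps ∘L R) (hRc : R ∘L Pc = Pc ∘L R)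
    -- coercivity on `E_u`, dissipativity on `E_s`, and `R = 0` on `E_c`
    (hu : ∀ x, c * ‖Pu x‖ ^ 2 ≤ (inner ℝ (R (Pu x)) (Pu x) : ℝ))
    (hs : ∀ x, (inner ℝ (R (Ps x)) (Ps x) : ℝ) ≤ -c * ‖Ps x‖ ^ 2)
    (hcz : ∀ x, R (Pc x) = 0) :
    -- for `κ < c/4` sufficiently small, the cone functional
    -- `Φ(t) = ‖Pu h‖² − ‖Ps h‖² − ‖Pc h‖²` grows exponentially
    ∃ κ₀ : ℝ, 0 < κ₀ ∧ κ₀ ≤ c / 4 ∧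
      ∀ (κ T : ℝ) (h g : ℝ → EuclideanSpace ℝ (Fin d)),
        0 ≤ κ → κ ≤ κ₀ → 0 ≤ T →
        (∀ t ∈ Set.Icc 0 T, HasDerivAt h (R (h t) + g t) t) →
        (∀ t ∈ Set.Icc 0 T, ‖g t‖ ≤ κ * ‖h t‖) →
        0 < ‖Pu (h 0)‖ ^ 2 - ‖Ps (h 0)‖ ^ 2 - ‖Pc (h 0)‖ ^ 2 →
        ∀ t ∈ Set.Icc 0 T,
          (∀ s ∈ Set.Icc 0 t,
            0 < ‖Pu (h s)‖ ^ 2 - ‖Ps (h s)‖ ^ 2 - ‖Pc (h s)‖ ^ 2) →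
          Real.exp (c * t / 2) * (‖Pu (h 0)‖ ^ 2 - ‖Ps (h 0)‖ ^ 2 - ‖Pc (h 0)‖ ^ 2)
              ≤ ‖Pu (h t)‖ ^ 2 - ‖Ps (h t)‖ ^ 2 - ‖Pc (h t)‖ ^ 2 ∧
          Real.exp (c * t / 2) * (‖Pu (h 0)‖ ^ 2 - ‖Ps (h 0)‖ ^ 2 - ‖Pc (h 0)‖ ^ 2)
              ≤ ‖Pu (h t)‖ ^ 2 :=
  stmt18_general d c hc R Pu Ps Pc hsum hus huc hsc hPusa hPssa hRu hRs hRc hu hs hcz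
end
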